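/- arXiv:1707.07519 — 2 statements merged into one kernel-verified Lean document; each statement's English description precedes it below -/
import Mathlib

section
/- Let t ≥ 3 be an integer and set k = 2^t - 3. Then F_{2k+3}^{(k)} - 2^{2k+1} = F_2^{(k)} - 2^{t+2^t-3}, i.e., the tuple (n,m,n_1,m_1) = (2^{t+1}-3, 2^{t+1}-5, 2, t+2^t-3) is a solution of F_n^{(k)} - 2^m = F_{n_1}^{(k)} - 2^{m_1} with common value 1 - 2^{t+2^t-3}. -/
/-- The `k`-generalized Fibonacci sequence: `F 0 = 0`, `F 1 = 1`, and each later
term is the sum of the `k` preceding terms (terms with negative index being 0). -/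
def genFib (k : ℕ) : ℕ → ℕ
  | 0 => 0
  | 1 => 1
  | n + 2 => ∑ i ∈ Finset.range k, genFib k (n + 1 - i)
termination_by n => n
decreasing_by omega

lemma genFib_rec (k n : ℕ) (hk : 1 ≤ k) :
    genFib k (n + 3) + genFib k (n + 2 - k) = 2 * genFib k (n + 2) := by
  obtain ⟨m, rfl⟩ : ∃ m, k = m + 1 := ⟨k - 1, by omega⟩
  rw [show n + 3 = (n + 1) + 2 from rfl, genFib, genFib,
    Finset.sum_range_succ', Finset.sum_range_succ]
  simp only [show ∀ i, n + 1 + 1 - (i + 1) = n + 1 - i from fun i => by omega,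
    Nat.sub_zero, show n + 2 - (m + 1) = n + 1 - m from by omega]
  rw [show n + 1 + 1 = n + 2 from rfl, genFib, Finset.sum_range_succ]
  ring

lemma genFib_two (k : ℕ) (hk : 1 ≤ k) : genFib k 2 = 1 := by
  obtain ⟨m, rfl⟩ : ∃ m, k = m + 1 := ⟨k - 1, by omega⟩
  rw [genFib, Finset.sum_range_succ']
  simp [genFib]

lemma genFib_pow (k : ℕ) (hk : 1 ≤ k) : ∀ j, j ≤ k - 1 → genFib k (j + 2) = 2 ^ j := by
  intro j
  induction j with
  | zero => intro _; simpa using genFib_two k hk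
  | succ i ih =>
    intro hij
    have h1 := genFib_rec k i hk
    have h2 : i + 2 - k = 0 := by omega
    rw [h2, ih (by omega), show genFib k 0 = 0 from by rw [genFib]] at h1
    rw [show i + 1 + 2 = i + 3 from rfl, pow_succ]
    omega

lemma genFib_top (k : ℕ) (hk : 2 ≤ k) :
    ∀ j, j ≤ k → (8 : ℤ) * genFib k (k + 2 + j) = 2 ^ (k + 3 + j) - (j + 2) * 2 ^ (j + 2) := by
  have hk2 : (genFib k (k + 2) : ℤ) = 2 ^ k - 1 := by
    have h1 := genFib_rec k (k - 1) (by omega)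
    rw [show k - 1 + 3 = k + 2 from by omega, show k - 1 + 2 - k = 1 from by omega,
      show k - 1 + 2 = (k - 1) + 2 from rfl, genFib_pow k (by omega) (k - 1) le_rfl] at h1
    have : genFib k 1 = 1 := by rw [genFib]
    rw [this] at h1
    have hp : (2 : ℤ) ^ k = 2 * 2 ^ (k - 1) := by
      rw [show (2 : ℤ) * 2 ^ (k - 1) = 2 ^ (k - 1) * 2 from by ring, ← pow_succ]
      congr 1; omega
    have h1' : (genFib k (k + 2) : ℤ) + 1 = 2 * 2 ^ (k - 1) := by exact_mod_cast h1
    linarith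
  intro j
  induction j with
  | zero =>
    intro _
    simp only [Nat.add_zero, hk2]
    ring
  | succ i ih =>
    intro hij
    have h1 := genFib_rec k (k + i) (by omega)
    rw [show k + i + 3 = k + 2 + (i + 1) from by omega,
      show k + i + 2 - k = i + 2 from by omega,
      show k + i + 2 = k + 2 + i from by omega,
      genFib_pow k (by omega) i (by omega)] at h1
    have ihv := ih (by omega)
    have h1' : (genFib k (k + 2 + (i + 1)) : ℤ) + 2 ^ i = 2 * genFib k (k + 2 + i) := by
      exact_mod_cast congrArg (Nat.cast : ℕ → ℤ) h1
    have : (8 : ℤ) * genFib k (k + 2 + (i + 1)) =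
        2 * (8 * genFib k (k + 2 + i)) - 8 * 2 ^ i := by linarith
    rw [this, ihv]
    rw [show k + 3 + (i + 1) = (k + 3 + i) + 1 from by omega,
      show i + 1 + 2 = (i + 2) + 1 from rfl, pow_succ, pow_succ, pow_succ]
    push_cast
    ring

theorem pillai_family_iv (t k : ℕ) (ht : 3 ≤ t) (hk : k = 2 ^ t - 3) :
    (genFib k (2 * k + 3) : ℤ) - 2 ^ (2 * k + 1) =
      (genFib k 2 : ℤ) - 2 ^ (t + 2 ^ t - 3) ∧
    (genFib k 2 : ℤ) - 2 ^ (t + 2 ^ t - 3) = 1 - 2 ^ (t + 2 ^ t - 3) := by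
  have h8 : 8 ≤ 2 ^ t := by
    calc (8 : ℕ) = 2 ^ 3 := by norm_num
    _ ≤ 2 ^ t := Nat.pow_le_pow_right (by norm_num) ht
  have hk5 : 5 ≤ k := by omega
  have htk : t + 2 ^ t - 3 = t + k := by omega
  have hc : ((k : ℤ)) + 3 = 2 ^ t := by exact_mod_cast (by omega : k + 3 = 2 ^ t)
  have h2 := genFib_top k (by omega) k le_rfl
  rw [show k + 2 + k = 2 * k + 2 from by omega, show k + 3 + k = 2 * k + 3 from by omega] at h2
  have h0 := genFib_top k (by omega) 0 (by omega)
  rw [show k + 2 + 0 = k + 2 from rfl, show k + 3 + 0 = k + 3 from rfl] at h0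
  norm_num at h0
  have hr := genFib_rec k (2 * k) (by omega)
  rw [show 2 * k + 2 - k = k + 2 from by omega] at hr
  have hr' : (genFib k (2 * k + 3) : ℤ) + genFib k (k + 2) = 2 * genFib k (2 * k + 2) := by
    exact_mod_cast hr
  have key : (8 : ℤ) * genFib k (2 * k + 3) =
      2 * (2 ^ (2 * k + 3) - ((k : ℤ) + 2) * 2 ^ (k + 2)) - (2 ^ (k + 3) - 8) := by
    linarith [h0, hr']
  have e1 : (2 : ℤ) ^ (2 * k + 3) = 4 * 2 ^ (2 * k + 1) := by rw [pow_add]; ring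
  have e2 : (2 : ℤ) ^ (k + 2) = 4 * 2 ^ k := by rw [pow_add]; ring
  have e3 : (2 : ℤ) ^ (k + 3) = 8 * 2 ^ k := by rw [pow_add]; ring
  have e4 : (2 : ℤ) ^ (t + k) = ((k : ℤ) + 3) * 2 ^ k := by rw [pow_add, hc]
  rw [genFib_two k (by omega), htk]
  constructor
  · push_cast
    rw [e4]
    rw [e1, e2, e3] at key
    linarith [key]
  · rfl
end

section
/- If positive integers m, m_1, n, n_1 with n > n_1 ≥ 2 and m > m_1 ≥ 0 satisfy F_n^{(k)} - F_{n_1}^{(k)} = 2^m - 2^{m_1} for some k ≥ 2, then α^{n-4} < 2^m and 2^{m-1} < α^{n-1}, where α is the dominant root of x^k - x^{k-1} - ... - x - 1; consequently 1 + (log 2/log α)(m-1) < n < (log 2/log α)m + 4. -/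
lemma genFib_zero (k : ℕ) : genFib k 0 = 0 := by rw [genFib]
lemma genFib_one (k : ℕ) : genFib k 1 = 1 := by rw [genFib]
lemma genFib_add_two (k n : ℕ) :
    genFib k (n + 2) = ∑ i ∈ Finset.range k, genFib k (n + 1 - i) := by rw [genFib]

lemma genFib_le_succ (k : ℕ) (hk : 1 ≤ k) : ∀ n, genFib k n ≤ genFib k (n + 1) := by
  intro n
  induction n using Nat.strong_induction_on with
  | _ n ih =>
    match n with
    | 0 => simp [genFib_zero]
    | 1 => rw [genFib_one, genFib_two k hk]
    | n + 2 =>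
      rw [genFib_add_two, show n + 2 + 1 = (n + 1) + 2 by ring, genFib_add_two]
      apply Finset.sum_le_sum
      intro i _
      rcases le_or_gt i (n + 1) with h | h
      · have h2 : n + 1 + 1 - i = (n + 1 - i) + 1 := by omega
        rw [h2]
        exact ih (n + 1 - i) (by omega)
      · have h1 : n + 1 - i = 0 := by omega
        rw [h1, genFib_zero]; exact Nat.zero_le _

lemma genFib_mono (k : ℕ) (hk : 1 ≤ k) : Monotone (genFib k) :=
  monotone_nat_of_le_succ (genFib_le_succ k hk)

lemma genFib_pos (k n : ℕ) (hk : 1 ≤ k) (hn : 1 ≤ n) : 1 ≤ genFib k n := by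
  have := genFib_mono k hk hn
  rwa [genFib_one] at this

lemma genFib_add_le (k n : ℕ) (hk : 2 ≤ k) :
    genFib k (n + 1) + genFib k n ≤ genFib k (n + 2) := by
  rw [genFib_add_two]
  have hsub : ({0, 1} : Finset ℕ) ⊆ Finset.range k := by
    intro i hi
    simp only [Finset.mem_insert, Finset.mem_singleton] at hi
    rcases hi with h | h <;> simp [h] <;> omega
  calc genFib k (n + 1) + genFib k n
      = ∑ i ∈ ({0, 1} : Finset ℕ), genFib k (n + 1 - i) := by
        rw [Finset.sum_pair (by norm_num)]
        norm_num
    _ ≤ ∑ i ∈ Finset.range k, genFib k (n + 1 - i) :=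
        Finset.sum_le_sum_of_subset hsub

lemma genFib_small (k : ℕ) (hk : 1 ≤ k) : ∀ n, n + 2 ≤ k + 1 → genFib k (n + 2) = 2 ^ n := by
  intro n
  induction n with
  | zero => intro _; rw [genFib_two k hk]; rfl
  | succ n ih =>
    intro hn
    have hk' : k = (k - 1) + 1 := by omega
    rw [show n + 1 + 2 = (n + 1) + 2 by ring, genFib_add_two]
    have e1 : ∑ i ∈ Finset.range k, genFib k (n + 1 + 1 - i)
        = (∑ i ∈ Finset.range (k - 1), genFib k (n + 1 - i)) + genFib k (n + 2) := by
      have h := Finset.sum_range_succ' (fun i => genFib k (n + 1 + 1 - i)) (k - 1)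
      rw [show k - 1 + 1 = k by omega] at h
      rw [h]
      congr 1
      apply Finset.sum_congr rfl
      intro i _
      congr 1
      omega
    have e2 : ∑ i ∈ Finset.range (k - 1), genFib k (n + 1 - i) = genFib k (n + 2) := by
      have h := Finset.sum_range_succ (fun i => genFib k (n + 1 - i)) (k - 1)
      rw [show k - 1 + 1 = k by omega] at h
      have hz : n + 1 - (k - 1) = 0 := by omega
      simp only [hz, genFib_zero, add_zero] at h
      rw [← h, ← genFib_add_two]
    rw [e1, e2, ih (by omega)]
    ring

lemma sum_zpow_eq (k : ℕ) (α : ℝ) (hα : 0 < α)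
    (hroot : α ^ k = ∑ i ∈ Finset.range k, α ^ i) (c : ℤ) :
    ∑ i ∈ Finset.range k, α ^ (c - (i : ℤ)) = α ^ (c + 1) := by
  have h0 : α ≠ 0 := ne_of_gt hα
  have key : ∀ i ∈ Finset.range k,
      α ^ (c - (i : ℤ)) = α ^ (c + 1 - (k : ℤ)) * α ^ ((k - 1 - i : ℕ) : ℤ) := by
    intro i hi
    have hik : i < k := Finset.mem_range.mp hi
    rw [← zpow_add₀ h0]
    congr 1
    omega
  rw [Finset.sum_congr rfl key, ← Finset.mul_sum]
  have hs : ∑ i ∈ Finset.range k, α ^ ((k - 1 - i : ℕ) : ℤ)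
      = ∑ i ∈ Finset.range k, α ^ (i : ℤ) := by
    simp only [zpow_natCast]
    exact Finset.sum_range_reflect (fun i => α ^ i) k
  rw [hs]
  have : ∑ i ∈ Finset.range k, α ^ (i : ℤ) = α ^ (k : ℤ) := by
    simp only [zpow_natCast]
    exact hroot.symm
  rw [this, ← zpow_add₀ h0]
  congr 1
  ring

lemma genFib_le_zpow (k : ℕ) (α : ℝ) (hk : 2 ≤ k) (hα : 1 ≤ α)
    (hroot : α ^ k = ∑ i ∈ Finset.range k, α ^ i) :
    ∀ n, 1 ≤ n → (genFib k n : ℝ) ≤ α ^ ((n : ℤ) - 1) := by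
  have hαpos : (0 : ℝ) < α := lt_of_lt_of_le one_pos hα
  intro n
  induction n using Nat.strong_induction_on with
  | _ n ih =>
    match n with
    | 0 => intro h; exact absurd h (by norm_num)
    | 1 => intro _; rw [genFib_one]; norm_num
    | n + 2 =>
      intro _
      rw [genFib_add_two]
      push_cast
      have hterm : ∀ i ∈ Finset.range k,
          (genFib k (n + 1 - i) : ℝ) ≤ α ^ ((n : ℤ) - (i : ℤ)) := by
        intro i _
        rcases le_or_gt i n with h | h
        · have h1 : 1 ≤ n + 1 - i := by omega
          have := ih (n + 1 - i) (by omega) h1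
          have hc : ((n + 1 - i : ℕ) : ℤ) - 1 = (n : ℤ) - (i : ℤ) := by omega
          rwa [hc] at this
        · have h1 : n + 1 - i = 0 := by omega
          rw [h1, genFib_zero]
          push_cast
          positivity
      calc (∑ i ∈ Finset.range k, (genFib k (n + 1 - i) : ℝ))
          ≤ ∑ i ∈ Finset.range k, α ^ ((n : ℤ) - (i : ℤ)) := Finset.sum_le_sum hterm
        _ = α ^ ((n : ℤ) + 1) := sum_zpow_eq k α hαpos hroot (n : ℤ)
        _ = α ^ ((n : ℤ) + 2 - 1) := by congr 1; ring
        _ = α ^ (((n : ℕ) + 2 : ℤ) - 1) := by norm_num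

lemma zpow_le_genFib (k : ℕ) (α : ℝ) (hk : 2 ≤ k) (hα : 1 ≤ α) (hα2 : α < 2)
    (hroot : α ^ k = ∑ i ∈ Finset.range k, α ^ i) :
    ∀ n : ℕ, 1 ≤ n → α ^ ((n : ℤ) - 2) ≤ (genFib k n : ℝ) := by
  have hαpos : (0 : ℝ) < α := lt_of_lt_of_le one_pos hα
  intro n
  induction n using Nat.strong_induction_on with
  | _ n ih =>
    match n with
    | 0 => intro h; exact absurd h (by norm_num)
    | 1 =>
      intro _
      rw [genFib_one]
      have : ((1 : ℕ) : ℤ) - 2 = -1 := by norm_num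
      rw [this]
      rw [zpow_neg_one]
      push_cast
      rw [inv_le_one_iff₀]
      right; exact hα
    | n + 2 =>
      intro _
      have hexp : (((n : ℕ) + 2 : ℤ)) - 2 = (n : ℤ) := by push_cast; ring
      rcases le_or_gt (n + 2) (k + 1) with hsmall | hbig
      · rw [genFib_small k (by omega) n hsmall]
        have h1 : α ^ (((n + 2 : ℕ) : ℤ) - 2) = α ^ (n : ℕ) := by
          rw [show ((n + 2 : ℕ) : ℤ) - 2 = ((n : ℕ) : ℤ) by push_cast; ring, zpow_natCast]
        rw [h1]
        push_cast
        calc α ^ n ≤ 2 ^ n := pow_le_pow_left₀ (le_of_lt hαpos) (le_of_lt hα2) n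
          _ = ((2 : ℕ) ^ n : ℝ) := by push_cast; ring
      · -- n + 1 ≥ k + 1, i.e. n ≥ k
        have hnk : k ≤ n := by omega
        rw [genFib_add_two]
        push_cast
        have hterm : ∀ i ∈ Finset.range k,
            α ^ ((n : ℤ) - 1 - (i : ℤ)) ≤ (genFib k (n + 1 - i) : ℝ) := by
          intro i hi
          have hik : i < k := Finset.mem_range.mp hi
          have h1 : 1 ≤ n + 1 - i := by omega
          have := ih (n + 1 - i) (by omega) h1
          have hc : ((n + 1 - i : ℕ) : ℤ) - 2 = (n : ℤ) - 1 - (i : ℤ) := by omega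
          rwa [hc] at this
        calc α ^ (((n + 2 : ℕ) : ℤ) - 2)
            = α ^ ((n : ℤ) - 1 + 1) := by rw [show ((n + 2 : ℕ) : ℤ) - 2 = (n : ℤ) - 1 + 1 by push_cast; ring]
          _ = ∑ i ∈ Finset.range k, α ^ ((n : ℤ) - 1 - (i : ℤ)) :=
              (sum_zpow_eq k α hαpos hroot ((n : ℤ) - 1)).symm
          _ ≤ ∑ i ∈ Finset.range k, (genFib k (n + 1 - i) : ℝ) := Finset.sum_le_sum hterm

theorem pillai_size_bounds (k n n1 m m1 : ℕ) (α : ℝ) (hk : 2 ≤ k)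
    (hn1 : 2 ≤ n1) (hnn : n1 < n) (hm : m1 < m)
    (hα1 : 2 * (1 - (2 : ℝ) ^ (-(k : ℤ))) < α) (hα2 : α < 2)
    (hroot : α ^ k = ∑ i ∈ Finset.range k, α ^ i)
    (heq : (genFib k n : ℤ) - (genFib k n1 : ℤ) = 2 ^ m - 2 ^ m1) :
    α ^ ((n : ℤ) - 4) < 2 ^ m ∧ (2 : ℝ) ^ ((m : ℤ) - 1) < α ^ ((n : ℤ) - 1) ∧
    1 + (Real.log 2 / Real.log α) * ((m : ℝ) - 1) < (n : ℝ) ∧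
    (n : ℝ) < (Real.log 2 / Real.log α) * (m : ℝ) + 4 := by
  have hαk : (2 : ℝ) ^ (-(k : ℤ)) ≤ 1 / 4 := by
    calc (2 : ℝ) ^ (-(k : ℤ)) ≤ (2 : ℝ) ^ (-2 : ℤ) :=
          zpow_le_zpow_right₀ (by norm_num) (by omega)
      _ = 1 / 4 := by norm_num
  have hα_one : 1 < α := by linarith
  have hαpos : (0 : ℝ) < α := by linarith
  have hα1' : 1 ≤ α := le_of_lt hα_one
  have hn3 : 3 ≤ n := by omega
  have hmono := genFib_mono k (by omega : 1 ≤ k)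
  -- cast the main equation to ℝ
  have heqR : (genFib k n : ℝ) - (genFib k n1 : ℝ) = 2 ^ m - 2 ^ m1 := by
    exact_mod_cast congrArg (Int.cast : ℤ → ℝ) heq
  -- Part 1 : α ^ (n - 4) < 2 ^ m
  have hA : (genFib k (n - 2) : ℤ) ≤ (genFib k n : ℤ) - (genFib k n1 : ℤ) := by
    have h1 : genFib k (n - 1) + genFib k (n - 2) ≤ genFib k n := by
      have := genFib_add_le k (n - 2) hk
      rwa [show n - 2 + 1 = n - 1 by omega, show n - 2 + 2 = n by omega] at this
    have h2 : genFib k n1 ≤ genFib k (n - 1) := hmono (by omega)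
    omega
  have hlow : α ^ ((n : ℤ) - 4) ≤ (genFib k (n - 2) : ℝ) := by
    have := zpow_le_genFib k α hk hα1' hα2 hroot (n - 2) (by omega)
    rwa [show ((n - 2 : ℕ) : ℤ) - 2 = (n : ℤ) - 4 by omega] at this
  have hAR : (genFib k (n - 2) : ℝ) ≤ (genFib k n : ℝ) - (genFib k n1 : ℝ) := by
    have : ((genFib k (n - 2) : ℤ) : ℝ) ≤ (((genFib k n : ℤ) - (genFib k n1 : ℤ) : ℤ) : ℝ) := Int.cast_le.mpr hA
    push_cast at this
    linarith
  have h2m1pos : (0 : ℝ) < 2 ^ m1 := by positivity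
  have part1 : α ^ ((n : ℤ) - 4) < 2 ^ m := by
    calc α ^ ((n : ℤ) - 4) ≤ (genFib k (n - 2) : ℝ) := hlow
      _ ≤ (genFib k n : ℝ) - (genFib k n1 : ℝ) := hAR
      _ = 2 ^ m - 2 ^ m1 := heqR
      _ < 2 ^ m := by linarith
  -- Part 2 : 2 ^ (m - 1) < α ^ (n - 1)
  have hup := genFib_le_zpow k α hk hα1' hroot n (by omega)
  have hB1 : (1 : ℝ) ≤ (genFib k n1 : ℝ) := by
    exact_mod_cast genFib_pos k n1 (by omega) (by omega)
  have h2e : (2 : ℝ) ^ ((m : ℤ) - 1) = 2 ^ (m - 1 : ℕ) := by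
    rw [← zpow_natCast (2 : ℝ) (m - 1 : ℕ)]
    congr 1
    omega
  have h2a : (2 : ℝ) ^ m1 ≤ 2 ^ (m - 1 : ℕ) := pow_le_pow_right₀ (by norm_num) (by omega)
  have h2b : (2 : ℝ) ^ m = 2 * 2 ^ (m - 1 : ℕ) := by
    rw [← pow_succ']
    congr 1
    omega
  have part2 : (2 : ℝ) ^ ((m : ℤ) - 1) < α ^ ((n : ℤ) - 1) := by
    rw [h2e]
    calc (2 : ℝ) ^ (m - 1 : ℕ) ≤ 2 ^ m - 2 ^ m1 := by linarith
      _ = (genFib k n : ℝ) - (genFib k n1 : ℝ) := heqR.symm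
      _ < (genFib k n : ℝ) := by linarith
      _ ≤ α ^ ((n : ℤ) - 1) := hup
  -- logs
  have hL2 : 0 < Real.log 2 := Real.log_pos (by norm_num)
  have hLα : 0 < Real.log α := Real.log_pos hα_one
  have hlog2 : ((m : ℝ) - 1) * Real.log 2 < ((n : ℝ) - 1) * Real.log α := by
    have h := Real.log_lt_log (by positivity) part2
    rwa [Real.log_zpow, Real.log_zpow, show (((m : ℤ) - 1 : ℤ) : ℝ) = (m : ℝ) - 1 by push_cast; ring,
      show (((n : ℤ) - 1 : ℤ) : ℝ) = (n : ℝ) - 1 by push_cast; ring] at h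
  have hlog1 : ((n : ℝ) - 4) * Real.log α < (m : ℝ) * Real.log 2 := by
    have h := Real.log_lt_log (by positivity) part1
    rw [Real.log_zpow, Real.log_pow] at h
    rw [show (((n : ℤ) - 4 : ℤ) : ℝ) = (n : ℝ) - 4 by push_cast; ring] at h
    exact_mod_cast h
  refine ⟨part1, part2, ?_, ?_⟩
  · have h3 : Real.log 2 / Real.log α * ((m : ℝ) - 1) < (n : ℝ) - 1 := by
      rw [div_mul_eq_mul_div, div_lt_iff₀ hLα]
      linarith [mul_comm (Real.log 2) ((m : ℝ) - 1)]
    linarith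
  · have h4 : (n : ℝ) - 4 < Real.log 2 / Real.log α * (m : ℝ) := by
      rw [div_mul_eq_mul_div, lt_div_iff₀ hLα]
      linarith [mul_comm (Real.log 2) ((m : ℝ))]
    linarith
end
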